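/- arXiv:1106.2666 — 3 statements merged into one kernel-verified Lean document; each statement's English description precedes it below -/
import Mathlib

section
/- For every positive integer n, if θ is a complex root of X^2 - sX + 1 where s = (6+n - √(n²+8n+4))/2, then |θ| = 1. In particular P_n(X) = X^4 - (6+n)X^3 + (10+n)X^2 - (6+n)X + 1 has two complex conjugate roots of modulus 1. -/
/-!
The number `s = smallRoot n` is the smaller root of `X² - (6+n)X + (8+n)`, so with
`t = 6 + n - s` one has `P_n = (X² - sX + 1)(X² - tX + 1)`. For `n > 0` the discriminant
`n² + 8n + 4` lies strictly between `(n+2)²` and `(n+4)²`, whence `1 < s < 2`. A root `θ` of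
`X² - sX + 1` with `|s| ≤ 2` satisfies `(2 re θ - s) im θ = 0`: either `re θ = s/2` and then
`|θ|² = 1` directly, or `θ` is real and the nonpositive discriminant forces `θ = s/2 = ±1`.
-/

open Complex ComplexConjugate

noncomputable def smallRoot (x : ℝ) : ℝ := (6 + x - √(x ^ 2 + 8 * x + 4)) / 2

lemma smallRoot_sq_sub_mul_add_eq_zero {x : ℝ} (hx : 0 ≤ x) :
    smallRoot x ^ 2 - (6 + x) * smallRoot x + (8 + x) = 0 := by
  have hr : √(x ^ 2 + 8 * x + 4) ^ 2 = x ^ 2 + 8 * x + 4 := Real.sq_sqrt (by positivity)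
  unfold smallRoot
  linear_combination hr / 4

lemma abs_smallRoot_lt_two {x : ℝ} (hx : 0 < x) : |smallRoot x| < 2 := by
  set r := √(x ^ 2 + 8 * x + 4)
  have hr0 : 0 ≤ r := Real.sqrt_nonneg _
  have hr : r ^ 2 = x ^ 2 + 8 * x + 4 := Real.sq_sqrt (by positivity)
  have hlow : x + 2 < r := by nlinarith
  have hhigh : r < x + 4 := by nlinarith
  rw [abs_lt]
  constructor <;> unfold smallRoot <;> linarith

theorem Complex.norm_eq_one_of_sq_sub_mul_add_one_eq_zero {s : ℝ} (hs : |s| ≤ 2) {θ : ℂ}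
    (h : θ ^ 2 - s * θ + 1 = 0) : ‖θ‖ = 1 := by
  have hre : θ.re ^ 2 - θ.im ^ 2 - s * θ.re + 1 = 0 := by
    simpa [sq] using congrArg re h
  have him : (2 * θ.re - s) * θ.im = 0 := by
    have := congrArg im h
    simp only [sq, sub_im, add_im, mul_im, ofReal_re, ofReal_im, one_im, zero_im] at this
    linear_combination this
  have hs2 : s ^ 2 ≤ 4 := by nlinarith [abs_nonneg s, sq_abs s]
  suffices normSq θ = 1 by rw [norm_def, this, Real.sqrt_one]
  rw [normSq_apply]
  rcases mul_eq_zero.mp him with hcenter | hreal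
  · linear_combination -hre + θ.re * hcenter
  · rw [hreal] at hre ⊢
    have hdisc : (2 * θ.re - s) ^ 2 = s ^ 2 - 4 := by linear_combination 4 * hre
    have hcenter : 2 * θ.re - s = 0 := by nlinarith [sq_nonneg (2 * θ.re - s)]
    linear_combination -hre + θ.re * hcenter

theorem Complex.exists_im_ne_zero_sq_sub_mul_add_one_eq_zero {s : ℝ} (hs : |s| < 2) :
    ∃ θ : ℂ, θ.im ≠ 0 ∧ θ ^ 2 - s * θ + 1 = 0 := by
  have hpos : 0 < 1 - s ^ 2 / 4 := by nlinarith [abs_nonneg s, sq_abs s]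
  obtain ⟨y, hy0, hy⟩ : ∃ y : ℝ, 0 < y ∧ y ^ 2 = 1 - s ^ 2 / 4 :=
    ⟨_, Real.sqrt_pos.mpr hpos, Real.sq_sqrt hpos.le⟩
  refine ⟨⟨s / 2, y⟩, hy0.ne', ?_⟩
  apply Complex.ext <;> simp only [sq, mul_re, mul_im, sub_re, sub_im, add_re, add_im, ofReal_re,
    ofReal_im, one_re, one_im, zero_re, zero_im]
  · linear_combination -hy
  · ring

lemma Complex.conj_sq_sub_mul_add_one_eq_zero {s : ℝ} {θ : ℂ} (h : θ ^ 2 - s * θ + 1 = 0) :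
    conj θ ^ 2 - s * conj θ + 1 = 0 := by
  simpa using congrArg conj h

lemma quartic_eq_zero_of_sq_sub_mul_add_one_eq_zero {R : Type*} [CommRing R] {n s θ : R}
    (hs : s ^ 2 - (6 + n) * s + (8 + n) = 0) (hθ : θ ^ 2 - s * θ + 1 = 0) :
    θ ^ 4 - (6 + n) * θ ^ 3 + (10 + n) * θ ^ 2 - (6 + n) * θ + 1 = 0 := by
  linear_combination (θ ^ 2 - (6 + n - s) * θ + 1) * hθ + θ ^ 2 * hs

/-- If `θ` is a complex root of `X² - sX + 1` where `s = (6+n - √(n²+8n+4))/2`, then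
`|θ| = 1`.  In particular `P_n(X) = X^4 - (6+n)X^3 + (10+n)X^2 - (6+n)X + 1` has two
complex conjugate roots of modulus 1. -/
theorem stmt2 (n : ℕ) (hn : 0 < n) :
    (∀ θ : ℂ,
        θ^2 - ((((6 + (n:ℝ) - Real.sqrt ((n:ℝ)^2 + 8*n + 4)) / 2 : ℝ) : ℂ)) * θ + 1 = 0 →
        ‖θ‖ = 1)
    ∧ ∃ θ : ℂ, θ.im ≠ 0 ∧ ‖θ‖ = 1 ∧
        θ^4 - (6+(n:ℂ))*θ^3 + (10+(n:ℂ))*θ^2 - (6+(n:ℂ))*θ + 1 = 0 ∧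
        (starRingEnd ℂ θ)^4 - (6+(n:ℂ))*(starRingEnd ℂ θ)^3 + (10+(n:ℂ))*(starRingEnd ℂ θ)^2
          - (6+(n:ℂ))*(starRingEnd ℂ θ) + 1 = 0 := by
  have hs : |smallRoot n| < 2 := abs_smallRoot_lt_two (Nat.cast_pos.mpr hn)
  have hsC : (smallRoot n : ℂ) ^ 2 - (6 + n) * smallRoot n + (8 + n) = 0 := by
    simpa using congrArg ((↑) : ℝ → ℂ) (smallRoot_sq_sub_mul_add_eq_zero n.cast_nonneg)
  refine ⟨fun θ hθ ↦ norm_eq_one_of_sq_sub_mul_add_one_eq_zero hs.le hθ, ?_⟩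
  obtain ⟨θ, him, hθ⟩ := exists_im_ne_zero_sq_sub_mul_add_one_eq_zero hs
  exact ⟨θ, him, norm_eq_one_of_sq_sub_mul_add_one_eq_zero hs.le hθ,
    quartic_eq_zero_of_sq_sub_mul_add_one_eq_zero hsC hθ,
    quartic_eq_zero_of_sq_sub_mul_add_one_eq_zero hsC (conj_sq_sub_mul_add_one_eq_zero hθ)⟩
end

section
/- For every positive integer n, the polynomial P_n(X) = X^4 - (6+n)X^3 + (10+n)X^2 - (6+n)X + 1 is irreducible over ℚ. -/
/-!
`P_n` is the palindromic quartic `X⁴ + aX³ + bX² + aX + 1` with `a = -(6 + n)`, `b = 10 + n`, and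
by Gauss's lemma it suffices to show irreducibility over `ℤ`. An integer root is a unit, and
`P(±1) = 2 ± 2a + b = 0` would make `a² - 4b + 8 = (a ± 4)²`. In a factorization into monic
quadratics `(X² + pX + q)(X² + sX + t)` we have `qt = 1`; `q = t = -1` forces `a = -a`, while
`q = t = 1` gives `p + s = a`, `ps = b - 2`, so again `a² - 4b + 8 = (p - s)²`. Finally
`a² - 4b + 8 = n² + 8n + 4` lies strictly between `(n + 2)²` and `(n + 4)²` and has the wrong
parity to be `(n + 3)²`.
-/

open Polynomial

noncomputable def palindromicQuartic {R : Type*} [Semiring R] (a b : R) : R[X] :=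
  X ^ 4 + C a * X ^ 3 + C b * X ^ 2 + C a * X + 1

section

variable {R : Type*}

theorem palindromicQuartic_natDegree [Semiring R] [Nontrivial R] (a b : R) :
    (palindromicQuartic a b).natDegree = 4 := by
  unfold palindromicQuartic; compute_degree!

theorem palindromicQuartic_monic [Semiring R] (a b : R) : (palindromicQuartic a b).Monic := by
  unfold palindromicQuartic; monicity!

theorem palindromicQuartic_map [Semiring R] {S : Type*} [Semiring S] (f : R →+* S) (a b : R) :
    (palindromicQuartic a b).map f = palindromicQuartic (f a) (f b) := by
  simp [palindromicQuartic]

theorem isUnit_of_isRoot_palindromicQuartic [CommRing R] {a b r : R}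
    (h : (palindromicQuartic a b).IsRoot r) : IsUnit r := by
  refine IsUnit.of_mul_eq_one (-(r ^ 3 + a * r ^ 2 + b * r + a)) ?_
  simp only [palindromicQuartic, IsRoot.def, eval_add, eval_mul, eval_pow, eval_C, eval_X,
    eval_one] at h
  linear_combination -h

theorem coeff_eq_of_palindromicQuartic_eq_mul [CommRing R] {a b p q s t : R}
    (h : palindromicQuartic a b = (X ^ 2 + C p * X + C q) * (X ^ 2 + C s * X + C t)) :
    p + s = a ∧ q + t + p * s = b ∧ p * t + q * s = a ∧ q * t = 1 := by
  have expand : (X ^ 2 + C p * X + C q) * (X ^ 2 + C s * X + C t) =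
      X ^ 4 + C (p + s) * X ^ 3 + C (q + t + p * s) * X ^ 2 + C (p * t + q * s) * X
        + C (q * t) := by
    simp only [C_add, C_mul]; ring
  rw [expand, palindromicQuartic, ← C_1] at h
  have hcoeff (k : ℕ) := congrArg (coeff · k) h.symm
  simp only [coeff_add, coeff_C_mul, coeff_X_pow, coeff_X, coeff_C] at hcoeff
  exact ⟨by simpa using hcoeff 3, by simpa using hcoeff 2, by simpa using hcoeff 1,
    by simpa using hcoeff 0⟩

theorem Polynomial.Monic.eq_X_sq_add_C_mul_X_add_C [Semiring R] {p : R[X]} (hm : p.Monic)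
    (hp : p.natDegree = 2) :
    p = X ^ 2 + C (p.coeff 1) * X + C (p.coeff 0) := by
  conv_lhs => rw [hm.as_sum, hp]
  simp only [Finset.sum_range_succ, Finset.sum_range_zero, pow_zero, pow_one, mul_one, zero_add]
  rw [add_comm (C (p.coeff 0)), add_assoc]

end

theorem Int.not_isSquare_sq_add_eight_mul_add_four {N : ℤ} (hN : 0 < N) :
    ¬IsSquare (N ^ 2 + 8 * N + 4) := by
  rintro ⟨d, hd⟩
  rw [← abs_mul_abs_self] at hd
  have hd0 := abs_nonneg d
  have hlow : N + 2 < |d| := by nlinarith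
  have hhigh : |d| < N + 4 := by nlinarith
  have hmid : |d| = N + 3 := by omega
  rw [hmid] at hd
  have : 2 * N = 5 := by linear_combination hd
  omega

section

variable {a b : ℤ}

theorem not_isRoot_palindromicQuartic (hdisc : ¬IsSquare (a ^ 2 - 4 * b + 8)) (r : ℤ) :
    ¬(palindromicQuartic a b).IsRoot r := by
  intro hr
  obtain rfl | rfl := Int.isUnit_iff.mp (isUnit_of_isRoot_palindromicQuartic hr) <;>
    simp only [palindromicQuartic, IsRoot.def, eval_add, eval_mul, eval_pow, eval_C, eval_X,
      eval_one] at hr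
  · exact hdisc ⟨a + 4, by linear_combination (-4) * hr⟩
  · exact hdisc ⟨a - 4, by linear_combination (-4) * hr⟩

theorem palindromicQuartic_ne_mul_quadratic (ha : a ≠ 0) (hdisc : ¬IsSquare (a ^ 2 - 4 * b + 8))
    (p q s t : ℤ) :
    palindromicQuartic a b ≠ (X ^ 2 + C p * X + C q) * (X ^ 2 + C s * X + C t) := by
  intro h
  obtain ⟨h3, h2, h1, h0⟩ := coeff_eq_of_palindromicQuartic_eq_mul h
  rcases Int.eq_one_or_neg_one_of_mul_eq_one' h0 with ⟨rfl, rfl⟩ | ⟨rfl, rfl⟩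
  · exact hdisc ⟨p - s, by linear_combination (-(p + s + a)) * h3 + 4 * h2⟩
  · exact ha (by linarith)

theorem irreducible_palindromicQuartic (ha : a ≠ 0) (hdisc : ¬IsSquare (a ^ 2 - 4 * b + 8)) :
    Irreducible (palindromicQuartic a b) := by
  have hne_one : palindromicQuartic a b ≠ 1 := fun h => by
    simpa [h] using palindromicQuartic_natDegree a b
  refine (palindromicQuartic_monic a b).irreducible_iff_natDegree'.2
    ⟨hne_one, fun f g hf hg hfg hdeg => ?_⟩
  rw [palindromicQuartic_natDegree] at hdeg
  have hsum : f.natDegree + g.natDegree = 4 := by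
    rw [← hf.natDegree_mul hg, hfg, palindromicQuartic_natDegree]
  obtain hg1 | hg2 : g.natDegree = 1 ∨ g.natDegree = 2 := by rw [Finset.mem_Ioc] at hdeg; omega
  · refine not_isRoot_palindromicQuartic hdisc (-g.coeff 0) ?_
    rw [← hfg, hg.eq_X_add_C hg1]
    simp
  · rw [hf.eq_X_sq_add_C_mul_X_add_C (by omega), hg.eq_X_sq_add_C_mul_X_add_C hg2] at hfg
    exact palindromicQuartic_ne_mul_quadratic ha hdisc _ _ _ _ hfg.symm

end

/-- `P_n(X) = X^4 - (6+n)X^3 + (10+n)X^2 - (6+n)X + 1` is irreducible over `ℚ`. -/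
theorem stmt6 (n : ℕ) (hn : 0 < n) :
    Irreducible
      (X^4 - C ((6:ℚ)+n) * X^3 + C ((10:ℚ)+n) * X^2 - C ((6:ℚ)+n) * X + 1 :
        Polynomial ℚ) := by
  have hint : Irreducible (palindromicQuartic (-(6 + n : ℤ)) (10 + n)) :=
    irreducible_palindromicQuartic (by omega) <| by
      convert Int.not_isSquare_sq_add_eight_mul_add_four (N := n) (by omega) using 2; ring
  have hQ : X^4 - C ((6:ℚ)+n) * X^3 + C ((10:ℚ)+n) * X^2 - C ((6:ℚ)+n) * X + 1 =
      palindromicQuartic (-(6 + n : ℚ)) (10 + n) := by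
    rw [palindromicQuartic, C_neg]; ring
  rw [hQ]
  simpa [palindromicQuartic_map] using (IsPrimitive.Int.irreducible_iff_irreducible_map_cast
    (palindromicQuartic_monic _ _).isPrimitive).mp hint
end

section
/- For every positive integer n, if θ₂ = e^{2πiα} is a root of modulus 1 of the irreducible polynomial P_n(X) = X^4 - (6+n)X^3 + (10+n)X^2 - (6+n)X + 1, then α is irrational (equivalently, θ₂ is not a root of unity). -/
open Polynomial

/-! With `t = 2 Re θ = θ + θ⁻¹`, dividing `P_n(θ)` by `θ²` shows `t² - (6 + n) t + (8 + n) = 0`.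
This quadratic has no rational root `t ≤ 2`, so `t` is a quadratic irrational whose conjugate
`t' = 6 + n - t` exceeds `2`. If `θ ^ k = 1`, then `D_k(t) = θ ^ k + θ ^ (-k) = 2` for the Dickson
polynomial `D_k ∈ ℚ[X]`, so also `D_k(t') = 2`; but `D_k(x) > 2` whenever `x > 2`. -/

theorem Polynomial.two_lt_dickson_one_one_eval {k : ℕ} (hk : 0 < k) {x : ℝ} (hx : 2 < x) :
    2 < (dickson 1 (1 : ℝ) k).eval x := by
  -- write `x = u + u⁻¹` with `u > 1`
  set u : ℝ := (x + √(x ^ 2 - 4)) / 2 with hu_def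
  have hsq : √(x ^ 2 - 4) ^ 2 = x ^ 2 - 4 := Real.sq_sqrt (by nlinarith)
  have hu : 1 < u := by rw [hu_def]; nlinarith [Real.sqrt_nonneg (x ^ 2 - 4)]
  have hmul : u * (x - u) = 1 := by rw [hu_def]; nlinarith
  have huk : 1 < u ^ k := one_lt_pow₀ hu hk.ne'
  have hmulk : u ^ k * (x - u) ^ k = 1 := by rw [← mul_pow, hmul, one_pow]
  have heval := dickson_one_one_eval_add_inv (n := k) u (x - u) hmul
  rw [add_sub_cancel] at heval
  rw [heval]
  nlinarith

theorem Polynomial.aeval_dickson {R S : Type*} [CommRing R] [CommRing S] [Algebra R S]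
    (k : ℕ) (a : R) (n : ℕ) (x : S) :
    aeval x (dickson k a n) = (dickson k (algebraMap R S a) n).eval x := by
  rw [aeval_def, eval₂_eq_eval_map, map_dickson]

theorem Complex.ofReal_two_mul_re_of_norm_eq_one {θ : ℂ} (hθ : ‖θ‖ = 1) :
    ((2 * θ.re : ℝ) : ℂ) = θ + θ⁻¹ := by
  rw [inv_eq_conj hθ, add_conj]

theorem Polynomial.dickson_one_one_eval_two_mul_re {θ : ℂ} (hθ : ‖θ‖ = 1) (k : ℕ) :
    (dickson 1 (1 : ℝ) k).eval (2 * θ.re) = 2 * (θ ^ k).re := by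
  have hθk : ‖θ ^ k‖ = 1 := by rw [norm_pow, hθ, one_pow]
  have hθ0 : θ ≠ 0 := by rintro rfl; simp at hθ
  apply Complex.ofReal_injective
  rw [← Complex.coe_algebraMap, ← aeval_algebraMap_apply_eq_algebraMap_eval, Complex.coe_algebraMap,
    aeval_dickson, map_one, Complex.ofReal_two_mul_re_of_norm_eq_one hθ,
    dickson_one_one_eval_add_inv _ _ (mul_inv_cancel₀ hθ0), inv_pow,
    Complex.ofReal_two_mul_re_of_norm_eq_one hθk]

theorem Complex.two_mul_re_sq_add_of_palindromic {θ : ℂ} (hθ : ‖θ‖ = 1) {a b : ℝ}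
    (hroot : θ ^ 4 + a * θ ^ 3 + b * θ ^ 2 + a * θ + 1 = 0) :
    (2 * θ.re) ^ 2 + a * (2 * θ.re) + (b - 2) = 0 := by
  have hθ0 : θ ≠ 0 := by rintro rfl; simp at hθ
  have h : 2 * (θ.re : ℂ) = θ + θ⁻¹ := by exact_mod_cast ofReal_two_mul_re_of_norm_eq_one hθ
  apply ofReal_injective
  push_cast
  rw [h]
  field_simp
  linear_combination hroot

theorem aeval_neg_sub_eq_zero_of_irrational {b c : ℚ} {t : ℝ} (ht : Irrational t)
    (hq : t ^ 2 + b * t + c = 0) {p : ℚ[X]} (hp : aeval t p = 0) : aeval (-b - t) p = 0 := by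
  set q : ℚ[X] := X ^ 2 + C b * X + C c
  have hq_monic : q.Monic := by simp only [q]; monicity!
  have hq_deg : q.natDegree = 2 := by simp only [q]; compute_degree!
  have hqt : aeval t q = 0 := by simp [q]; linear_combination hq
  have hint : IsIntegral ℚ t := ⟨q, hq_monic, by rwa [← aeval_def]⟩
  have hmin : q = minpoly ℚ t :=
    eq_of_monic_of_dvd_of_natDegree_le (minpoly.monic hint) hq_monic (minpoly.dvd ℚ t hqt)
      (hq_deg.trans_le ((minpoly.two_le_natDegree_iff hint).mpr ht))
  obtain ⟨s, rfl⟩ := minpoly.dvd ℚ t hp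
  rw [map_mul, ← hmin, mul_eq_zero_of_left]
  simp [q]
  linear_combination hq

theorem Rat.exists_int_eq_of_sq_add_mul_add_eq_zero {b c : ℤ} {r : ℚ}
    (hr : r ^ 2 + b * r + c = 0) : ∃ m : ℤ, r = m := by
  have hmonic : (X ^ 2 + C b * X + C c : ℤ[X]).Monic := by monicity!
  obtain ⟨m, hm⟩ := isInteger_of_is_root_of_monic hmonic (r := r) (by simpa using hr)
  exact ⟨m, by simpa using hm.symm⟩

theorem irrational_of_sq_sub_mul_add_eq_zero {n : ℕ} (hn : 0 < n) {t : ℝ} (ht : t ≤ 2)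
    (hq : t ^ 2 - (6 + n) * t + (8 + n) = 0) : Irrational t := by
  rintro ⟨r, rfl⟩
  have hrQ : r ^ 2 - (6 + n) * r + (8 + n) = 0 := by exact_mod_cast hq
  obtain ⟨m, rfl⟩ := Rat.exists_int_eq_of_sq_add_mul_add_eq_zero (b := -(6 + n)) (c := 8 + n)
    (r := r) (by push_cast; linear_combination hrQ)
  have hmZ : m ^ 2 - (6 + n) * m + (8 + n) = 0 := by exact_mod_cast hq
  have hm2 : m ≤ 2 := by exact_mod_cast ht
  have hnZ : (1 : ℤ) ≤ n := by exact_mod_cast hn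
  rcases le_or_gt m 0 with hm0 | hm0
  · nlinarith
  · interval_cases m <;> omega

/-- If `θ` is a root of modulus 1 of
`P_n(X) = X^4 - (6+n)X^3 + (10+n)X^2 - (6+n)X + 1`, then `θ` is not a root of unity
(equivalently, writing `θ = e^{2πiα}`, the number `α` is irrational). -/
theorem stmt7 (n : ℕ) (hn : 0 < n) (θ : ℂ) (habs : ‖θ‖ = 1)
    (hroot : θ^4 - (6+(n:ℂ))*θ^3 + (10+(n:ℂ))*θ^2 - (6+(n:ℂ))*θ + 1 = 0) :
    ∀ k : ℕ, 0 < k → θ^k ≠ 1 := by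
  intro k hk hθk
  set t := 2 * θ.re
  have hq : t ^ 2 + ((-(6 + n) : ℚ) : ℝ) * t + ((8 + n : ℚ) : ℝ) = 0 := by
    have := Complex.two_mul_re_sq_add_of_palindromic habs (a := -(6 + n)) (b := 10 + n)
      (by push_cast; linear_combination hroot)
    push_cast
    linear_combination this
  have ht : t ≤ 2 := by linarith [Complex.re_le_norm θ]
  have hirr : Irrational t :=
    irrational_of_sq_sub_mul_add_eq_zero hn ht (by push_cast at hq; linear_combination hq)
  have hD : aeval t (dickson 1 (1 : ℚ) k - 2) = 0 := by
    rw [map_sub, aeval_dickson, map_one, map_ofNat, dickson_one_one_eval_two_mul_re habs, hθk]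
    simp
  have hD' : (dickson 1 (1 : ℝ) k).eval (6 + n - t) = 2 := by
    have h := aeval_neg_sub_eq_zero_of_irrational hirr hq hD
    rw [map_sub, aeval_dickson, map_one, map_ofNat, sub_eq_zero] at h
    push_cast at h
    simpa using h
  exact (two_lt_dickson_one_one_eval hk (by linarith [n.cast_nonneg (α := ℝ)])).ne' hD'
end
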